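/- arXiv:1012.1496 — 9 statements merged into one kernel-verified Lean document; each statement's English description precedes it below -/
import Mathlib

section
/- Let W be a k-dimensional subspace of an N-dimensional Hilbert space H with orthonormal basis {e_i}. Then there exists a subset K ⊆ {1,...,N} with |K| = k and an idempotent operator P with range W such that ⟨P*P e_i, e_j⟩ = 0 whenever (i,j) ∉ K × K. -/
/-!
Extend a basis of `W` by standard basis vectors `e_i`, `i ∉ K`, to a basis of `H`; this needs
exactly `N - k` of them. Let `P` be the projection onto `W` along `U = span {e_i | i ∉ K}`. Then
`⟪P*P e_i, e_j⟫ = ⟪P e_i, P e_j⟫`, which vanishes as soon as `i ∉ K` or `j ∉ K`.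
-/

open Submodule Set

theorem Submodule.exists_isCompl_span_image_basis {ι K V : Type*} [Field K] [AddCommGroup V]
    [Module K V] (b : Module.Basis ι K V) (W : Submodule K V) :
    ∃ s : Set ι, IsCompl W (span K (b '' s)) := by
  -- Take `s` such that the classes of `b i`, `i ∈ s`, form a basis of `V ⧸ W`.
  obtain ⟨s, -, -, hspan, hli⟩ := exists_linearIndepOn_extension (v := W.mkQ ∘ b)
    (linearIndepOn_empty K _) (empty_subset univ)
  refine ⟨s, ?_, ?_⟩
  · have hdisj := Submodule.range_ker_disjoint (v := fun i : s => b i) hli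
    rw [ker_mkQ, ← image_eq_range] at hdisj
    exact hdisj.symm
  · have hmap : map W.mkQ (span K (b '' s)) = ⊤ := by
      rw [map_span, ← image_comp, eq_top_iff, ← W.range_mkQ, LinearMap.range_eq_map,
        ← b.span_eq, map_span, ← range_comp, ← image_univ]
      exact span_le.2 hspan
    rw [codisjoint_iff, ← comap_map_mkQ, hmap, comap_top]

theorem Module.Basis.finrank_span_image_finset {ι K V : Type*} [Field K] [AddCommGroup V]
    [Module K V] (b : Module.Basis ι K V) (s : Finset ι) :
    Module.finrank K (span K (b '' s)) = s.card := by
  rw [image_eq_range, ← Fintype.card_coe s]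
  exact finrank_span_eq_card (b.linearIndependent.comp _ Subtype.val_injective)

theorem Submodule.exists_finset_card_eq_finrank_isCompl_span_compl {ι K V : Type*} [Fintype ι]
    [DecidableEq ι] [Field K] [AddCommGroup V] [Module K V] (b : Module.Basis ι K V)
    (W : Submodule K V) :
    ∃ s : Finset ι, s.card = Module.finrank K W ∧ IsCompl W (span K (b '' ↑sᶜ)) := by
  classical
  have : FiniteDimensional K V := .of_basis b
  obtain ⟨t, ht⟩ := W.exists_isCompl_span_image_basis b
  refine ⟨t.toFinsetᶜ, ?_, by simpa using ht⟩
  have hdim := finrank_add_eq_of_isCompl ht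
  rw [← coe_toFinset t, b.finrank_span_image_finset, Module.finrank_eq_card_basis b] at hdim
  rw [Finset.card_compl]
  omega

theorem LinearMap.inner_adjoint_comp_self_apply_eq_zero {𝕜 E : Type*} [RCLike 𝕜]
    [NormedAddCommGroup E] [InnerProductSpace 𝕜 E] [FiniteDimensional 𝕜 E] (P : E →ₗ[𝕜] E)
    {x y : E} (h : P x = 0 ∨ P y = 0) :
    inner 𝕜 ((LinearMap.adjoint P ∘ₗ P) x) y = 0 := by
  rw [LinearMap.comp_apply, LinearMap.adjoint_inner_left]
  rcases h with hx | hy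
  · rw [hx, inner_zero_left]
  · rw [hy, inner_zero_right]

theorem stmt_2 (N k : ℕ) (W : Submodule ℂ (EuclideanSpace ℂ (Fin N)))
    (hW : Module.finrank ℂ W = k) :
    ∃ K : Finset (Fin N), K.card = k ∧
      ∃ P : EuclideanSpace ℂ (Fin N) →ₗ[ℂ] EuclideanSpace ℂ (Fin N),
        P ∘ₗ P = P ∧ LinearMap.range P = W ∧
        ∀ i j : Fin N, ¬(i ∈ K ∧ j ∈ K) →
          (inner ℂ ((LinearMap.adjoint P ∘ₗ P) (EuclideanSpace.single i (1 : ℂ)))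
            (EuclideanSpace.single j (1 : ℂ)) : ℂ) = 0 := by
  let e := (EuclideanSpace.basisFun (Fin N) ℂ).toBasis
  obtain ⟨K, hK, hcompl⟩ := W.exists_finset_card_eq_finrank_isCompl_span_compl e
  have hPe : ∀ i ∉ K, W.projection _ hcompl (EuclideanSpace.single i 1) = 0 := fun i hi =>
    (projection_apply_eq_zero_iff hcompl).2 (subset_span ⟨i, by simpa using hi, by simp [e]⟩)
  refine ⟨K, hK.trans hW, W.projection _ hcompl, isIdempotentElem_projection hcompl,
    range_projection hcompl, fun i j hij => ?_⟩
  exact LinearMap.inner_adjoint_comp_self_apply_eq_zero _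
    ((not_and_or.1 hij).imp (hPe i) (hPe j))
end

section
/- For every subspace W of an N-dimensional Hilbert space H with orthonormal basis {e_i}_{i=1}^N, there exists an idempotent P with range W whose matrix with respect to {e_i} is (lower) triangular. -/
/-!
Call `i` a pivot of `W` when `W ∩ flag (i + 1) ⊄ flag i`, where `flag k` is spanned by the first
`k` basis vectors. The basis vectors at the non-pivot indices span a complement `C` of `W` that is
compatible with the flag: `flag k = (flag k ∩ W) ⊕ (flag k ∩ C)` for every `k`. Hence the
projection onto `W` along `C` maps every `flag k` into itself, i.e. its matrix is triangular.
-/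

open Submodule

namespace Submodule

variable {R E : Type*} [Ring R] [AddCommGroup E] [Module R E] {p q U : Submodule R E}

theorem projection_mem_of_le_inf_sup_inf (hpq : IsCompl p q) (hU : U ≤ U ⊓ p ⊔ U ⊓ q)
    {x : E} (hx : x ∈ U) : p.projection q hpq x ∈ U := by
  obtain ⟨y, ⟨hyU, hyp⟩, z, ⟨-, hzq⟩, rfl⟩ := mem_sup.mp (hU hx)
  rwa [map_add, projection_apply_of_mem_left hpq hyp, projection_apply_of_mem_right hpq hzq,
    add_zero]

end Submodule

namespace Module.Basis

section Semiring

variable {R M : Type*} [Semiring R] [AddCommMonoid M] [Module R M] {n : ℕ}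

theorem mem_flag_iff (b : Basis (Fin n) R M) {k : Fin (n + 1)} {x : M} :
    x ∈ b.flag k ↔ ∀ j : Fin n, k ≤ j.castSucc → b.repr x j = 0 := by
  simp only [flag, b.mem_span_image, Set.subset_def, Finset.mem_coe, Finsupp.mem_support_iff,
    Set.mem_ofPred_eq]
  exact forall_congr' fun j => by rw [← not_le, not_imp_comm, not_not]

theorem mem_flag_castSucc_iff (b : Basis (Fin n) R M) {i : Fin n} {x : M} :
    x ∈ b.flag i.castSucc ↔ x ∈ b.flag i.succ ∧ b.repr x i = 0 := by
  simp only [mem_flag_iff, Fin.castSucc_le_castSucc_iff, Fin.succ_le_castSucc_iff]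
  exact ⟨fun h => ⟨fun j hj => h j hj.le, h i le_rfl⟩,
    fun ⟨h, hi⟩ j hj => hj.eq_or_lt.elim (· ▸ hi) (h j)⟩

end Semiring

variable {K V : Type*} [DivisionRing K] [AddCommGroup V] [Module K V] {n : ℕ}
  (b : Basis (Fin n) K V) (W : Submodule K V)

def IsPivot (i : Fin n) : Prop := ¬ W ⊓ b.flag i.succ ≤ b.flag i.castSucc

def nonPivotSpan : Submodule K V := span K (b '' {i | ¬ b.IsPivot W i})

theorem flag_le_inf_sup_inf_nonPivotSpan (k : Fin (n + 1)) :
    b.flag k ≤ b.flag k ⊓ W ⊔ b.flag k ⊓ b.nonPivotSpan W := by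
  induction k using Fin.induction with
  | zero => simp
  | succ i ih =>
    set S := b.flag i.succ ⊓ W ⊔ b.flag i.succ ⊓ b.nonPivotSpan W
    have hflag : b.flag i.castSucc ≤ S :=
      ih.trans (sup_le_sup (inf_le_inf_right _ (b.flag_mono i.castSucc_le_succ))
        (inf_le_inf_right _ (b.flag_mono i.castSucc_le_succ)))
    suffices b i ∈ S by
      rw [flag_succ]
      exact sup_le ((span_singleton_le_iff_mem _ _).mpr this) hflag
    by_cases hi : b.IsPivot W i
    · obtain ⟨w, ⟨hwW, hwflag⟩, hw⟩ := SetLike.not_le_iff_exists.mp hi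
      have hc : b.repr w i ≠ 0 := fun h => hw (b.mem_flag_castSucc_iff.mpr ⟨hwflag, h⟩)
      have hu : w - b.repr w i • b i ∈ b.flag i.castSucc := by
        refine b.mem_flag_castSucc_iff.mpr ⟨sub_mem hwflag (smul_mem _ _ ?_), by simp⟩
        exact b.self_mem_flag (Fin.castSucc_lt_succ (i := i))
      rw [← smul_mem_iff _ hc, ← sub_sub_cancel w (b.repr w i • b i)]
      exact sub_mem (mem_sup_left ⟨hwflag, hwW⟩) (hflag hu)
    · exact mem_sup_right
        ⟨b.self_mem_flag (Fin.castSucc_lt_succ (i := i)), subset_span ⟨i, hi, rfl⟩⟩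

theorem inf_nonPivotSpan_inf_flag_eq_bot (k : Fin (n + 1)) :
    W ⊓ b.nonPivotSpan W ⊓ b.flag k = ⊥ := by
  induction k using Fin.induction with
  | zero => simp
  | succ i ih =>
    rw [eq_bot_iff]
    rintro x ⟨⟨hxW, hxC⟩, hxflag⟩
    suffices x ∈ b.flag i.castSucc from ih.le ⟨⟨hxW, hxC⟩, this⟩
    by_cases hi : b.IsPivot W i
    · refine b.mem_flag_castSucc_iff.mpr ⟨hxflag, by_contra fun hx => ?_⟩
      exact b.mem_span_image.mp hxC (Finsupp.mem_support_iff.mpr hx) hi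
    · exact not_not.mp hi ⟨hxW, hxflag⟩

theorem isCompl_nonPivotSpan : IsCompl W (b.nonPivotSpan W) := by
  constructor
  · rw [disjoint_iff, ← inf_top_eq (W ⊓ _), ← b.flag_last]
    exact b.inf_nonPivotSpan_inf_flag_eq_bot W _
  · rw [codisjoint_iff, eq_top_iff, ← b.flag_last]
    exact (b.flag_le_inf_sup_inf_nonPivotSpan W _).trans (sup_le_sup inf_le_right inf_le_right)

theorem exists_isIdempotentElem_range_eq_and_mem_flag :
    ∃ P : V →ₗ[K] V, IsIdempotentElem P ∧ LinearMap.range P = W ∧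
      ∀ k, ∀ x ∈ b.flag k, P x ∈ b.flag k :=
  ⟨W.projection _ (b.isCompl_nonPivotSpan W), isIdempotentElem_projection _, range_projection _,
    fun k _ => projection_mem_of_le_inf_sup_inf _ (b.flag_le_inf_sup_inf_nonPivotSpan W k)⟩

end Module.Basis

theorem stmt_4 {H : Type*} [NormedAddCommGroup H] [InnerProductSpace ℂ H]
    (N : ℕ) (b : OrthonormalBasis (Fin N) ℂ H) (W : Submodule ℂ H) :
    ∃ P : H →ₗ[ℂ] H, P ∘ₗ P = P ∧ LinearMap.range P = W ∧
      ∀ i j : Fin N, i < j → (inner ℂ (P (b i)) (b j) : ℂ) = 0 := by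
  obtain ⟨P, hidem, hrange, hflag⟩ := b.toBasis.exists_isIdempotentElem_range_eq_and_mem_flag W
  refine ⟨P, hidem, hrange, fun i j hij => ?_⟩
  have hPi : P (b i) ∈ b.toBasis.flag i.succ :=
    hflag _ _ (by simpa using b.toBasis.self_mem_flag (Fin.castSucc_lt_succ (i := i)))
  rw [← inner_conj_symm, ← b.repr_apply_apply, ← b.coe_toBasis_repr_apply,
    b.toBasis.mem_flag_iff.mp hPi j (Fin.succ_le_castSucc_iff.mpr hij), map_zero]
end

section
/- If {x_i}_{i=1}^M is a frame for an N-dimensional Hilbert space H (i.e., the x_i span H) and W_i = span{x_i}, then there exist idempotents P_i with range P_i = W_i and positive weights v_i such that ∑_{i=1}^M v_i² P_i* P_i = Id. -/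
/-!
The frame operator `S = ∑ xᵢ xᵢ*` of a spanning family is positive and invertible, so
`cᵢ = S^(-1/2) xᵢ` is a Parseval frame: `∑ cᵢ cᵢ* = S^(-1/2) S S^(-1/2) = 1`. As `S^(-1/2)` is
strictly positive, `⟪cᵢ, xᵢ⟫ ≠ 0`, so `Pᵢ = ⟪cᵢ, xᵢ⟫⁻¹ xᵢ cᵢ*` is an idempotent with range `ℂ ∙ xᵢ`
and `Pᵢ* Pᵢ = (‖xᵢ‖ / ‖⟪cᵢ, xᵢ⟫‖)² cᵢ cᵢ*`; the weights `vᵢ = ‖⟪cᵢ, xᵢ⟫‖ / ‖xᵢ‖` cancel this factor.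
-/

open InnerProductSpace ContinuousLinearMap

variable {E : Type*} [NormedAddCommGroup E] [InnerProductSpace ℂ E]

lemma eq_zero_of_forall_inner_eq_zero {ι : Type*} (x : ι → E)
    (hspan : Submodule.span ℂ (Set.range x) = ⊤) {y : E} (hy : ∀ i, inner ℂ (x i) y = 0) :
    y = 0 := by
  have : Submodule.span ℂ (Set.range x) ≤ (ℂ ∙ y)ᗮ := Submodule.span_le.2 <| by
    rintro _ ⟨i, rfl⟩
    exact Submodule.mem_orthogonal_singleton_iff_inner_left.2 (hy i)
  rw [hspan, top_le_iff, Submodule.eq_top_iff'] at this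
  exact inner_self_eq_zero.1 (Submodule.mem_orthogonal_singleton_iff_inner_left.1 (this y))

section FrameOperator

variable {ι : Type*} [Fintype ι]

noncomputable def frameOperator (x : ι → E) : E →L[ℂ] E :=
  ∑ i, rankOne ℂ (x i) (x i)

lemma inner_frameOperator_apply_self (x : ι → E) (y : E) :
    inner ℂ (frameOperator x y) y = ((∑ i, ‖inner ℂ (x i) y‖ ^ 2 : ℝ) : ℂ) := by
  simp only [frameOperator, sum_apply, rankOne_apply, sum_inner, inner_smul_left,
    RCLike.conj_mul]
  push_cast
  rfl

lemma isPositive_frameOperator (x : ι → E) : (frameOperator x).IsPositive :=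
  isPositive_sum _ fun i _ => isPositive_rankOne_self (x i)

lemma frameOperator_comp [CompleteSpace E] (x : ι → E) (T : E →L[ℂ] E) :
    frameOperator (T ∘ x) = T * frameOperator x * adjoint T := by
  simp [frameOperator, Finset.mul_sum, Finset.sum_mul, mul_def, comp_rankOne, rankOne_comp]

lemma ker_frameOperator (x : ι → E) (hspan : Submodule.span ℂ (Set.range x) = ⊤) :
    LinearMap.ker (frameOperator x : E →ₗ[ℂ] E) = ⊥ := by
  refine (Submodule.eq_bot_iff _).2 fun y hy => eq_zero_of_forall_inner_eq_zero x hspan fun i => ?_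
  have h := inner_frameOperator_apply_self x y
  rw [← coe_coe, LinearMap.mem_ker.1 hy, inner_zero_left, eq_comm, Complex.ofReal_eq_zero,
    Finset.sum_eq_zero_iff_of_nonneg fun i _ => by positivity] at h
  simpa using h i (Finset.mem_univ i)

lemma isStrictlyPositive_frameOperator [FiniteDimensional ℂ E] (x : ι → E)
    (hspan : Submodule.span ℂ (Set.range x) = ⊤) : IsStrictlyPositive (frameOperator x) :=
  ⟨(nonneg_iff_isPositive _).2 (isPositive_frameOperator x),
    isUnit_iff_isUnit_toLinearMap.2 <| (LinearMap.isUnit_iff_ker_eq_bot _).2 <|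
      ker_frameOperator x hspan⟩

end FrameOperator

lemma IsStrictlyPositive.re_inner_apply_self_pos [CompleteSpace E] {T : E →L[ℂ] E}
    (hT : IsStrictlyPositive T) {x : E} (hx : x ≠ 0) : 0 < RCLike.re (inner ℂ (T x) x) := by
  set R := CFC.sqrt T
  have hR : IsSelfAdjoint R := (CFC.sqrt_nonneg T).isSelfAdjoint
  have hR_inj : Function.Injective R :=
    ((Module.End.isUnit_iff _).1 (isUnit_iff_isUnit_toLinearMap.1 hT.isUnit_cfcSqrt)).injective
  have hRx : R x ≠ 0 := fun h => hx (hR_inj (by rw [h, map_zero]))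
  calc 0 < ‖R x‖ ^ 2 := by positivity
    _ = RCLike.re (inner ℂ (T x) x) := by
      rw [← CFC.sqrt_mul_sqrt_self T, mul_apply_eq_comp, ← adjoint_inner_right, hR.adjoint_eq,
        inner_self_eq_norm_sq]

section ObliqueProjection

/-- The projection onto `ℂ ∙ x` along `cᗮ`. -/
noncomputable def obliqueProjection (x c : E) : E →L[ℂ] E :=
  (inner ℂ c x)⁻¹ • rankOne ℂ x c

variable {x c : E}

lemma isIdempotentElem_obliqueProjection (h : inner ℂ c x ≠ 0) :
    IsIdempotentElem (obliqueProjection x c) := by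
  simp [IsIdempotentElem, obliqueProjection, mul_def, rankOne_comp_rankOne, smul_smul, h]

lemma range_obliqueProjection (h : inner ℂ c x ≠ 0) :
    LinearMap.range (obliqueProjection x c : E →ₗ[ℂ] E) = ℂ ∙ x := by
  refine le_antisymm ?_ ((Submodule.span_singleton_le_iff_mem _ _).2 ⟨x, ?_⟩)
  · rintro _ ⟨y, rfl⟩
    exact Submodule.mem_span_singleton.2
      ⟨(inner ℂ c x)⁻¹ * inner ℂ c y, by simp [obliqueProjection, smul_smul]⟩
  · simp [obliqueProjection, h]

lemma adjoint_mul_obliqueProjection [CompleteSpace E] :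
    adjoint (obliqueProjection x c) * obliqueProjection x c =
      (((‖x‖ / ‖inner ℂ c x‖) ^ 2 : ℝ) : ℂ) • rankOne ℂ c c := by
  simp only [obliqueProjection, map_smulₛₗ, adjoint_rankOne, mul_def, smul_comp, comp_smulₛₗ,
    rankOne_comp_rankOne, smul_smul]
  congr 1
  rw [RingHom.id_apply, map_inv₀, inner_self_eq_norm_sq_to_K, ← mul_assoc, ← mul_inv,
    mul_comm _ (starRingEnd ℂ _), RCLike.conj_mul]
  simp only [RCLike.ofReal_eq_complex_ofReal]
  push_cast
  ring

end ObliqueProjection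

theorem exists_isIdempotentElem_sum_smul_adjoint_mul_eq_one [FiniteDimensional ℂ E]
    {ι : Type*} [Fintype ι] (x : ι → E) (hx : ∀ i, x i ≠ 0)
    (hspan : Submodule.span ℂ (Set.range x) = ⊤) :
    ∃ (P : ι → E →L[ℂ] E) (v : ι → ℝ), (∀ i, 0 < v i) ∧ (∀ i, IsIdempotentElem (P i)) ∧
      (∀ i, LinearMap.range (P i : E →ₗ[ℂ] E) = ℂ ∙ x i) ∧
      ∑ i, ((v i : ℂ) ^ 2) • (adjoint (P i) * P i) = 1 := by
  have hS := isStrictlyPositive_frameOperator x hspan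
  set T := frameOperator x ^ (-(1 / 2) : ℝ)
  have hT : IsStrictlyPositive T := IsStrictlyPositive.rpow _ _ hS
  have hTx : ∀ i, inner ℂ (T (x i)) (x i) ≠ 0 := fun i h =>
    (hT.re_inner_apply_self_pos (hx i)).ne' (by rw [h, map_zero])
  have hparseval : frameOperator (T ∘ x) = 1 := by
    rw [frameOperator_comp, hT.nonneg.isSelfAdjoint.adjoint_eq]
    exact CFC.conjugate_rpow_neg_one_half _
  refine ⟨fun i => obliqueProjection (x i) (T (x i)), fun i => ‖inner ℂ (T (x i)) (x i)‖ / ‖x i‖,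
    fun i => by have := hTx i; have := hx i; positivity,
    fun i => isIdempotentElem_obliqueProjection (hTx i),
    fun i => range_obliqueProjection (hTx i), ?_⟩
  rw [← hparseval, frameOperator]
  refine Finset.sum_congr rfl fun i _ => ?_
  have hxi : ‖x i‖ ≠ 0 := norm_ne_zero_iff.2 (hx i)
  have hti : ‖inner ℂ (T (x i)) (x i)‖ ≠ 0 := norm_ne_zero_iff.2 (hTx i)
  rw [adjoint_mul_obliqueProjection, smul_smul, ← Complex.ofReal_pow, ← Complex.ofReal_mul,
    ← mul_pow, div_mul_div_cancel₀ hxi, div_self hti, one_pow, Complex.ofReal_one, one_smul]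
  rfl

theorem stmt_6 (N M : ℕ) (x : Fin M → EuclideanSpace ℂ (Fin N))
    (hx : ∀ i, x i ≠ 0) (hspan : Submodule.span ℂ (Set.range x) = ⊤) :
    ∃ (P : Fin M → (EuclideanSpace ℂ (Fin N) →ₗ[ℂ] EuclideanSpace ℂ (Fin N)))
      (v : Fin M → ℝ),
      (∀ i, 0 < v i) ∧
      (∀ i, P i ∘ₗ P i = P i) ∧
      (∀ i, LinearMap.range (P i) = Submodule.span ℂ {x i}) ∧
      ∑ i, ((v i : ℂ) ^ 2) • (LinearMap.adjoint (P i) ∘ₗ P i) = LinearMap.id := by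
  obtain ⟨P, v, hv, hidem, hrange, hsum⟩ :=
    exists_isIdempotentElem_sum_smul_adjoint_mul_eq_one x hx hspan
  refine ⟨fun i => P i, v, hv, fun i => LinearMap.ext fun y => DFunLike.congr_fun (hidem i).eq y,
    hrange, ?_⟩
  ext1 y
  simpa [ContinuousLinearMap.adjoint_toLinearMap] using DFunLike.congr_fun hsum y
end

section
/- Let W be a k-dimensional subspace of an N-dimensional Hilbert space and P an idempotent with range W such that P*P is diagonal with respect to the standard orthonormal basis {e_i}. Then {P e_i : P e_i ≠ 0} is an orthogonal basis for W consisting of exactly k vectors, and the diagonal entries of P*P are ‖P e_i‖². -/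
/-! Since `⟪P*P e_i, e_j⟫ = ⟪P e_i, P e_j⟫`, diagonality of `P*P` says exactly that the vectors
`P e_i` are pairwise orthogonal, so the nonzero ones are linearly independent. They span
`P(ℂᴺ) = W`, hence form an orthogonal basis of `W` and there are `dim W = k` of them. -/

open Module Submodule Set

theorem LinearMap.span_range_comp_basis {R M M₂ ι : Type*} [Semiring R] [AddCommMonoid M]
    [AddCommMonoid M₂] [Module R M] [Module R M₂] (f : M →ₗ[R] M₂) (b : Basis ι R M) :
    span R (Set.range (f ∘ b)) = LinearMap.range f := by
  rw [Set.range_comp, ← map_span, b.span_eq, Submodule.map_top]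

theorem Submodule.span_image_ne_zero {R M ι : Type*} [Semiring R] [AddCommMonoid M]
    [Module R M] (v : ι → M) : span R (v '' {i | v i ≠ 0}) = span R (Set.range v) := by
  rw [← span_sdiff_singleton_zero (s := Set.range v)]
  congr 1
  ext x
  constructor
  · rintro ⟨i, hi, rfl⟩
    exact ⟨mem_range_self i, hi⟩
  · rintro ⟨⟨i, rfl⟩, hi⟩
    exact ⟨i, hi, rfl⟩

theorem finrank_span_eq_card_ne_zero_of_pairwise_inner_eq_zero {𝕜 E ι : Type*} [RCLike 𝕜]
    [NormedAddCommGroup E] [InnerProductSpace 𝕜 E] [Finite ι] {v : ι → E}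
    (hv : Pairwise fun i j => inner 𝕜 (v i) (v j) = 0) :
    finrank 𝕜 (span 𝕜 (Set.range v)) = Nat.card {i // v i ≠ 0} := by
  have : Fintype {i // v i ≠ 0} := Fintype.ofFinite _
  have hli : LinearIndependent 𝕜 fun i : {i // v i ≠ 0} => v i :=
    linearIndependent_of_ne_zero_of_inner_eq_zero Subtype.prop
      fun i j hij => hv (Subtype.coe_injective.ne hij)
  rw [← span_image_ne_zero, image_eq_range]
  exact (finrank_span_eq_card hli).trans Nat.card_eq_fintype_card.symm

theorem stmt_7_general (N k : ℕ) (W : Submodule ℂ (EuclideanSpace ℂ (Fin N)))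
    (hWk : Module.finrank ℂ W = k)
    (P : EuclideanSpace ℂ (Fin N) →ₗ[ℂ] EuclideanSpace ℂ (Fin N))
    (hrange : LinearMap.range P = W)
    (hdiag : ∀ i j : Fin N, i ≠ j →
      (inner ℂ ((LinearMap.adjoint P ∘ₗ P) (EuclideanSpace.single i (1 : ℂ)))
        (EuclideanSpace.single j (1 : ℂ)) : ℂ) = 0) :
    Nat.card {i : Fin N // P (EuclideanSpace.single i (1 : ℂ)) ≠ 0} = k ∧
    (∀ i j : Fin N, i ≠ j →
      (inner ℂ (P (EuclideanSpace.single i (1 : ℂ)))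
        (P (EuclideanSpace.single j (1 : ℂ))) : ℂ) = 0) ∧
    Submodule.span ℂ
      ((fun i => P (EuclideanSpace.single i (1 : ℂ))) ''
        {i : Fin N | P (EuclideanSpace.single i (1 : ℂ)) ≠ 0}) = W ∧
    (∀ i : Fin N,
      (inner ℂ ((LinearMap.adjoint P ∘ₗ P) (EuclideanSpace.single i (1 : ℂ)))
        (EuclideanSpace.single i (1 : ℂ)) : ℂ)
        = (‖P (EuclideanSpace.single i (1 : ℂ))‖ ^ 2 : ℝ)) := by
  set v : Fin N → EuclideanSpace ℂ (Fin N) := fun i => P (EuclideanSpace.single i 1)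
  have hgram (i j : Fin N) :
      inner ℂ ((LinearMap.adjoint P ∘ₗ P) (EuclideanSpace.single i 1))
        (EuclideanSpace.single j (1 : ℂ)) = inner ℂ (v i) (v j) :=
    LinearMap.adjoint_inner_left P _ _
  have horth : Pairwise fun i j => inner ℂ (v i) (v j) = 0 :=
    fun i j hij => (hgram i j).symm.trans (hdiag i j hij)
  have hspan : span ℂ (Set.range v) = W := by
    rw [← hrange, ← P.span_range_comp_basis (EuclideanSpace.basisFun (Fin N) ℂ).toBasis]
    congr 2
    ext1 i
    simp [v]
  refine ⟨?_, horth, (span_image_ne_zero v).trans hspan, fun i => ?_⟩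
  · rw [← hWk, ← hspan, finrank_span_eq_card_ne_zero_of_pairwise_inner_eq_zero horth]
  · rw [hgram, inner_self_eq_norm_sq_to_K]
    push_cast
    rfl

theorem stmt_7 (N k : ℕ) (W : Submodule ℂ (EuclideanSpace ℂ (Fin N)))
    (hWk : Module.finrank ℂ W = k)
    (P : EuclideanSpace ℂ (Fin N) →ₗ[ℂ] EuclideanSpace ℂ (Fin N))
    (hP : P ∘ₗ P = P) (hrange : LinearMap.range P = W)
    (hdiag : ∀ i j : Fin N, i ≠ j →
      (inner ℂ ((LinearMap.adjoint P ∘ₗ P) (EuclideanSpace.single i (1 : ℂ)))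
        (EuclideanSpace.single j (1 : ℂ)) : ℂ) = 0) :
    Nat.card {i : Fin N // P (EuclideanSpace.single i (1 : ℂ)) ≠ 0} = k ∧
    (∀ i j : Fin N, i ≠ j →
      (inner ℂ (P (EuclideanSpace.single i (1 : ℂ)))
        (P (EuclideanSpace.single j (1 : ℂ))) : ℂ) = 0) ∧
    Submodule.span ℂ
      ((fun i => P (EuclideanSpace.single i (1 : ℂ))) ''
        {i : Fin N | P (EuclideanSpace.single i (1 : ℂ)) ≠ 0}) = W ∧
    (∀ i : Fin N,
      (inner ℂ ((LinearMap.adjoint P ∘ₗ P) (EuclideanSpace.single i (1 : ℂ)))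
        (EuclideanSpace.single i (1 : ℂ)) : ℂ)
        = (‖P (EuclideanSpace.single i (1 : ℂ))‖ ^ 2 : ℝ)) :=
  stmt_7_general N k W hWk P hrange hdiag
end

section
/- Let W be a k-dimensional subspace of an N-dimensional Hilbert space H with k > N/2. If there exists an idempotent P with range W such that P*P is diagonal with respect to the standard orthonormal basis {e_i}, then at least 2k − N of the basis vectors e_i belong to W. -/
/-!
Write `e i` for the basis vectors and `S` for the set of indices with `P (e i) ≠ 0`. As `P*P` is
diagonal, the vectors `P (e i)` are pairwise orthogonal, and idempotence gives
`⟪P e_i, P e_j⟫ = ⟪P e_i, P (P e_j)⟫ = ‖P e_i‖² ⟪e_i, P e_j⟫`; so for `i ∈ S` the `i`-th coordinate of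
`P (e j)` is `δ_ij`. Hence `W = span {P (e j) | j ∈ S}` gives `k ≤ |S|`, while the vectors
`P (e j) - e j` with `j ∈ S`, `e j ∉ W` are nonzero, pairwise orthogonal and orthogonal to every
`e i` with `i ∈ S`. Counting dimensions, `(|S| - g) + |S| ≤ N`, where `g` counts the `e j` in `W`.
-/

open Finset LinearMap
open scoped InnerProductSpace

namespace OrthonormalBasis

variable {𝕜 E ι : Type*} [RCLike 𝕜] [NormedAddCommGroup E] [InnerProductSpace 𝕜 E] [Fintype ι]
  (b : OrthonormalBasis ι 𝕜 E) {P : E →ₗ[𝕜] E}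

theorem inner_map_map_eq_inner_mul_inner_self (hP : IsIdempotentElem P)
    (horth : Pairwise fun i j ↦ ⟪P (b i), P (b j)⟫_𝕜 = 0) (i j : ι) :
    ⟪P (b i), P (b j)⟫_𝕜 = ⟪b i, P (b j)⟫_𝕜 * ⟪P (b i), P (b i)⟫_𝕜 := by
  calc ⟪P (b i), P (b j)⟫_𝕜 = ⟪P (b i), P (P (b j))⟫_𝕜 := by
        rw [hP.mem_range_iff.mp (mem_range_self P _)]
    _ = ∑ m, ⟪b m, P (b j)⟫_𝕜 * ⟪P (b i), P (b m)⟫_𝕜 := by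
        conv_lhs => rw [← b.sum_repr' (P (b j))]
        simp only [map_sum, map_smul, inner_sum, inner_smul_right]
    _ = _ := sum_eq_single i (fun m _ hm ↦ by rw [horth hm.symm, mul_zero]) (by simp)

theorem inner_map_eq_ite_of_map_ne_zero [DecidableEq ι] (hP : IsIdempotentElem P)
    (horth : Pairwise fun i j ↦ ⟪P (b i), P (b j)⟫_𝕜 = 0) {i : ι} (hi : P (b i) ≠ 0) (j : ι) :
    ⟪b i, P (b j)⟫_𝕜 = if i = j then 1 else 0 := by
  have hii : ⟪P (b i), P (b i)⟫_𝕜 ≠ 0 := inner_self_ne_zero.mpr hi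
  have key := b.inner_map_map_eq_inner_mul_inner_self hP horth i j
  split_ifs with hij
  · subst hij
    exact (mul_eq_right₀ hii).mp key.symm
  · rw [horth hij] at key
    exact (mul_eq_zero.mp key.symm).resolve_right hii

theorem inner_sub_eq_zero_of_map_ne_zero (hP : IsIdempotentElem P)
    (horth : Pairwise fun i j ↦ ⟪P (b i), P (b j)⟫_𝕜 = 0) {i : ι} (hi : P (b i) ≠ 0) (j : ι) :
    ⟪b i, P (b j) - b j⟫_𝕜 = 0 := by
  classical
  rw [inner_sub_right, b.inner_map_eq_ite_of_map_ne_zero hP horth hi, b.inner_eq_ite, sub_self]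

theorem inner_sub_sub_eq_zero_of_map_ne_zero (hP : IsIdempotentElem P)
    (horth : Pairwise fun i j ↦ ⟪P (b i), P (b j)⟫_𝕜 = 0) {i j : ι} (hi : P (b i) ≠ 0)
    (hj : P (b j) ≠ 0) (hij : i ≠ j) : ⟪P (b i) - b i, P (b j) - b j⟫_𝕜 = 0 := by
  classical
  rw [inner_sub_right, inner_eq_zero_symm.mp (b.inner_sub_eq_zero_of_map_ne_zero hP horth hj i),
    inner_sub_left, horth hij, b.inner_map_eq_ite_of_map_ne_zero hP horth hi, if_neg hij, sub_zero,
    sub_self]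

open scoped Classical in
theorem finrank_range_le_card_filter_map_ne_zero :
    Module.finrank 𝕜 (range P) ≤ #{i | P (b i) ≠ 0} := by
  have : FiniteDimensional 𝕜 E := b.toBasis.finiteDimensional_of_finite
  let S : Finset ι := {i | P (b i) ≠ 0}
  have hspan : range P ≤ Submodule.span 𝕜 ((S.image fun i ↦ P (b i) : Finset E) : Set E) := by
    rintro _ ⟨x, rfl⟩
    rw [← b.sum_repr' x, map_sum]
    refine Submodule.sum_mem _ fun i _ ↦ ?_
    by_cases hi : P (b i) = 0
    · simp [hi]
    · rw [map_smul]
      exact Submodule.smul_mem _ _ (Submodule.subset_span (mem_image_of_mem _ (by simp [S, hi])))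
  calc Module.finrank 𝕜 (range P) ≤ _ := Submodule.finrank_mono hspan
    _ ≤ #(S.image fun i ↦ P (b i)) := finrank_span_finset_le_card _
    _ ≤ #S := card_image_le

open scoped Classical in
theorem card_sdiff_add_card_le_card (hP : IsIdempotentElem P)
    (horth : Pairwise fun i j ↦ ⟪P (b i), P (b j)⟫_𝕜 = 0) :
    #(({i | P (b i) ≠ 0} : Finset ι) \ ({i | b i ∈ range P} : Finset ι)) + #{i | P (b i) ≠ 0} ≤ Fintype.card ι := by
  have : FiniteDimensional 𝕜 E := b.toBasis.finiteDimensional_of_finite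
  set S : Finset ι := {i | P (b i) ≠ 0}
  set G : Finset ι := {i | b i ∈ range P}
  have hS {i} (hi : i ∈ S) : P (b i) ≠ 0 := (mem_filter.mp hi).2
  let f : ↥(S \ G) ⊕ ↥S → E := Sum.elim (fun j ↦ P (b j) - b j) (fun i ↦ b i)
  have hf0 : ∀ x, f x ≠ 0 := by
    rintro (⟨j, hj⟩ | ⟨i, -⟩)
    · have hjG : b j ∉ range P := by simpa [G] using (mem_sdiff.mp hj).2
      exact sub_ne_zero.mpr fun h ↦ hjG (hP.mem_range_iff.mpr h)
    · exact b.orthonormal.ne_zero i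
  have hf_orth : Pairwise fun x y ↦ ⟪f x, f y⟫_𝕜 = 0 := by
    rintro (⟨i, hi⟩ | ⟨i, hi⟩) (⟨j, hj⟩ | ⟨j, hj⟩) hne
    · exact b.inner_sub_sub_eq_zero_of_map_ne_zero hP horth (hS (mem_sdiff.mp hi).1)
        (hS (mem_sdiff.mp hj).1) fun h ↦ hne (by subst h; rfl)
    · exact inner_eq_zero_symm.mp
        (b.inner_sub_eq_zero_of_map_ne_zero hP horth (hS hj) i)
    · exact b.inner_sub_eq_zero_of_map_ne_zero hP horth (hS hi) j
    · exact b.orthonormal.2 fun h ↦ hne (by subst h; rfl)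
  have := (linearIndependent_of_ne_zero_of_inner_eq_zero hf0 hf_orth).fintype_card_le_finrank
  rwa [Fintype.card_sum, Fintype.card_coe, Fintype.card_coe,
    Module.finrank_eq_card_basis b.toBasis] at this

theorem two_mul_finrank_range_le_card_add_card (hP : IsIdempotentElem P)
    (horth : Pairwise fun i j ↦ ⟪P (b i), P (b j)⟫_𝕜 = 0) :
    2 * Module.finrank 𝕜 (range P) ≤ Fintype.card ι + Nat.card {i // b i ∈ range P} := by
  classical
  have hGS : ({i | b i ∈ range P} : Finset ι) ⊆ ({i | P (b i) ≠ 0} : Finset ι) := fun i hi ↦ by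
    have hi : b i ∈ range P := (mem_filter.mp hi).2
    simpa [hP.mem_range_iff.mp hi] using b.orthonormal.ne_zero i
  have hcard := b.card_sdiff_add_card_le_card hP horth
  rw [card_sdiff_of_subset hGS] at hcard
  have hG := card_le_card hGS
  have hrank := b.finrank_range_le_card_filter_map_ne_zero (P := P)
  rw [Nat.card_eq_fintype_card, Fintype.card_subtype]
  omega

end OrthonormalBasis

theorem stmt_8_general (N k : ℕ) (W : Submodule ℂ (EuclideanSpace ℂ (Fin N)))
    (hWk : Module.finrank ℂ W = k)
    (P : EuclideanSpace ℂ (Fin N) →ₗ[ℂ] EuclideanSpace ℂ (Fin N))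
    (hP : P ∘ₗ P = P) (hrange : LinearMap.range P = W)
    (hdiag : ∀ i j : Fin N, i ≠ j →
      (inner ℂ ((LinearMap.adjoint P ∘ₗ P) (EuclideanSpace.single i (1 : ℂ)))
        (EuclideanSpace.single j (1 : ℂ)) : ℂ) = 0) :
    2 * k - N ≤ Nat.card {i : Fin N // EuclideanSpace.single i (1 : ℂ) ∈ W} := by
  subst hrange hWk
  have horth : Pairwise fun i j ↦
      ⟪P (EuclideanSpace.basisFun (Fin N) ℂ i), P (EuclideanSpace.basisFun (Fin N) ℂ j)⟫_ℂ = 0 :=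
    fun i j hij ↦ by
      simpa [EuclideanSpace.basisFun_apply, LinearMap.adjoint_inner_left] using hdiag i j hij
  have := (EuclideanSpace.basisFun (Fin N) ℂ).two_mul_finrank_range_le_card_add_card hP horth
  simp only [EuclideanSpace.basisFun_apply, Fintype.card_fin] at this
  omega

theorem stmt_8 (N k : ℕ) (W : Submodule ℂ (EuclideanSpace ℂ (Fin N)))
    (hWk : Module.finrank ℂ W = k) (hk : N < 2 * k)
    (P : EuclideanSpace ℂ (Fin N) →ₗ[ℂ] EuclideanSpace ℂ (Fin N))
    (hP : P ∘ₗ P = P) (hrange : LinearMap.range P = W)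
    (hdiag : ∀ i j : Fin N, i ≠ j →
      (inner ℂ ((LinearMap.adjoint P ∘ₗ P) (EuclideanSpace.single i (1 : ℂ)))
        (EuclideanSpace.single j (1 : ℂ)) : ℂ) = 0) :
    2 * k - N ≤ Nat.card {i : Fin N // EuclideanSpace.single i (1 : ℂ) ∈ W} :=
  stmt_8_general N k W hWk P hP hrange hdiag
end

section
/- Fix k ≤ N/2 and K ⊆ {1,...,N} with |K| = k, and let {a_n}_{n∈K} be real numbers with a_n ≥ 1. Then there exists a k-dimensional subspace W of H and an idempotent P with range W such that P*P is diagonal with respect to the standard basis, with diagonal entries a_n for n ∈ K and 0 for n ∉ K. -/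
/-!
Send each `n ∈ K` injectively to some `τ n ∉ K` (possible since `2 |K| ≤ N`) and tilt the basis
vector `eₙ` to `wₙ = eₙ + √(aₙ - 1) e_{τ n}`. The projection `P` with `P eₙ = wₙ` for `n ∈ K` and
`P eₘ = 0` otherwise fixes every `wₙ`, because `P` kills `e_{τ n}`. The `wₙ` are pairwise orthogonal
with `‖wₙ‖² = aₙ`, and `⟪P*P eₘ, eₙ⟫ = ⟪P eₘ, P eₙ⟫` is their Gram matrix padded by zeros.
-/

open Module Submodule

lemma Finset.exists_mapsTo_compl_injOn {ι : Type*} [Fintype ι] [DecidableEq ι] (K : Finset ι)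
    (hK : 2 * K.card ≤ Fintype.card ι) :
    ∃ τ : ι → ι, Set.MapsTo τ K (↑K)ᶜ ∧ Set.InjOn τ K := by
  obtain ⟨σ⟩ : Nonempty (K ↪ (Kᶜ : Finset ι)) := by
    apply Function.Embedding.nonempty_of_card_le
    simp only [Fintype.card_coe, Finset.card_compl]
    omega
  refine ⟨fun n => if h : n ∈ K then σ ⟨n, h⟩ else n, fun n hn => ?_, fun m hm n hn h => ?_⟩
  · simpa only [dif_pos (Finset.mem_coe.mp hn), Set.mem_compl_iff, Finset.mem_coe] using
      Finset.mem_compl.mp (σ ⟨n, hn⟩).2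
  · simp only [dif_pos (Finset.mem_coe.mp hm), dif_pos (Finset.mem_coe.mp hn)] at h
    exact congrArg Subtype.val (σ.injective (Subtype.coe_injective h))

section TiltedProjection

variable {ι E : Type*} [Fintype ι] [DecidableEq ι] [NormedAddCommGroup E] [InnerProductSpace ℝ E]
  (b : OrthonormalBasis ι ℝ E) (K : Finset ι) (τ : ι → ι) (c : ι → ℝ)

noncomputable def tiltedVector (n : ι) : E := b n + c n • b (τ n)

noncomputable def tiltedProjection : E →ₗ[ℝ] E :=
  b.toBasis.constr ℝ fun m => if m ∈ K then tiltedVector b τ c m else 0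

lemma tiltedProjection_apply_basis (m : ι) :
    tiltedProjection b K τ c (b m) = if m ∈ K then tiltedVector b τ c m else 0 := by
  rw [tiltedProjection, ← b.coe_toBasis, Basis.constr_basis]

variable {K τ}

lemma inner_tiltedVector (hmaps : Set.MapsTo τ K (↑K)ᶜ) (hinj : Set.InjOn τ K)
    {m n : ι} (hm : m ∈ K) (hn : n ∈ K) :
    inner ℝ (tiltedVector b τ c m) (tiltedVector b τ c n) = if m = n then 1 + c m ^ 2 else 0 := by
  have hmn : m ≠ τ n := fun h => hmaps hn (h ▸ hm)
  have hnm : τ m ≠ n := fun h => hmaps hm (h ▸ hn)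
  have hττ : τ m = τ n ↔ m = n := ⟨fun h => hinj hm hn h, congrArg τ⟩
  simp only [tiltedVector, inner_add_left, inner_add_right, real_inner_smul_left,
    real_inner_smul_right, b.inner_eq_ite, hmn, hnm, hττ, if_false]
  split_ifs with h
  · subst h; ring
  · ring

lemma tiltedProjection_tiltedVector (hmaps : Set.MapsTo τ K (↑K)ᶜ) {n : ι} (hn : n ∈ K) :
    tiltedProjection b K τ c (tiltedVector b τ c n) = tiltedVector b τ c n := by
  have hτn : τ n ∉ K := hmaps hn
  conv_lhs => rw [tiltedVector]
  rw [map_add, map_smul, tiltedProjection_apply_basis, tiltedProjection_apply_basis, if_pos hn,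
    if_neg hτn, smul_zero, add_zero]

lemma tiltedProjection_comp_self (hmaps : Set.MapsTo τ K (↑K)ᶜ) :
    tiltedProjection b K τ c ∘ₗ tiltedProjection b K τ c = tiltedProjection b K τ c := by
  refine b.toBasis.ext fun m => ?_
  rw [b.coe_toBasis, LinearMap.comp_apply, tiltedProjection_apply_basis]
  split_ifs with hm
  · exact tiltedProjection_tiltedVector b c hmaps hm
  · exact map_zero _

lemma range_tiltedProjection :
    LinearMap.range (tiltedProjection b K τ c) =
      span ℝ (Set.range fun n : K => tiltedVector b τ c n) := by
  rw [tiltedProjection, Basis.constr_range]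
  apply le_antisymm <;> rw [span_le]
  · rintro _ ⟨m, rfl⟩
    dsimp only
    split_ifs with hm
    · exact subset_span ⟨⟨m, hm⟩, rfl⟩
    · exact zero_mem _
  · rintro _ ⟨n, rfl⟩
    exact subset_span ⟨n, if_pos n.2⟩

lemma finrank_range_tiltedProjection (hmaps : Set.MapsTo τ K (↑K)ᶜ) (hinj : Set.InjOn τ K) :
    finrank ℝ (LinearMap.range (tiltedProjection b K τ c)) = K.card := by
  have hind : LinearIndependent ℝ fun n : K => tiltedVector b τ c n := by
    refine linearIndependent_of_ne_zero_of_inner_eq_zero (fun n h => ?_) fun m n hmn => ?_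
    · have := inner_tiltedVector b c hmaps hinj n.2 n.2
      rw [h, inner_zero_left, if_pos rfl] at this
      nlinarith [sq_nonneg (c n)]
    · exact (inner_tiltedVector b c hmaps hinj m.2 n.2).trans (if_neg (Subtype.coe_injective.ne hmn))
  rw [range_tiltedProjection, finrank_span_eq_card hind, Fintype.card_coe]

lemma inner_tiltedProjection_apply_basis (hmaps : Set.MapsTo τ K (↑K)ᶜ) (hinj : Set.InjOn τ K)
    (m n : ι) :
    inner ℝ (tiltedProjection b K τ c (b m)) (tiltedProjection b K τ c (b n)) =
      if m = n ∧ m ∈ K then 1 + c m ^ 2 else 0 := by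
  rw [tiltedProjection_apply_basis, tiltedProjection_apply_basis]
  by_cases hm : m ∈ K
  · by_cases hn : n ∈ K
    · rw [if_pos hm, if_pos hn, inner_tiltedVector b c hmaps hinj hm hn]
      simp only [hm, and_true]
    · have hmn : m ≠ n := fun h => hn (h ▸ hm)
      simp [hn, hmn]
  · simp [hm]

end TiltedProjection

theorem stmt_13 (N k : ℕ) (hk : 2 * k ≤ N) (K : Finset (Fin N)) (hK : K.card = k)
    (a : Fin N → ℝ) (ha : ∀ n ∈ K, 1 ≤ a n) :
    ∃ W : Submodule ℝ (EuclideanSpace ℝ (Fin N)),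
      Module.finrank ℝ W = k ∧
      ∃ P : EuclideanSpace ℝ (Fin N) →ₗ[ℝ] EuclideanSpace ℝ (Fin N),
        P ∘ₗ P = P ∧ LinearMap.range P = W ∧
        (∀ m n : Fin N, m ≠ n →
          (inner ℝ ((LinearMap.adjoint P ∘ₗ P) (EuclideanSpace.single m (1 : ℝ)))
            (EuclideanSpace.single n (1 : ℝ)) : ℝ) = 0) ∧
        (∀ n ∈ K,
          (inner ℝ ((LinearMap.adjoint P ∘ₗ P) (EuclideanSpace.single n (1 : ℝ)))
            (EuclideanSpace.single n (1 : ℝ)) : ℝ) = a n) ∧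
        (∀ n ∉ K,
          (inner ℝ ((LinearMap.adjoint P ∘ₗ P) (EuclideanSpace.single n (1 : ℝ)))
            (EuclideanSpace.single n (1 : ℝ)) : ℝ) = 0) := by
  obtain ⟨τ, hmaps, hinj⟩ := K.exists_mapsTo_compl_injOn (by simpa [hK] using hk)
  set b := EuclideanSpace.basisFun (Fin N) ℝ
  set c : Fin N → ℝ := fun n => √(a n - 1)
  set P := tiltedProjection b K τ c
  have hgram (m n : Fin N) :
      inner ℝ ((LinearMap.adjoint P ∘ₗ P) (EuclideanSpace.single m 1)) (EuclideanSpace.single n 1)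
        = if m = n ∧ m ∈ K then 1 + c m ^ 2 else 0 := by
    rw [LinearMap.comp_apply, LinearMap.adjoint_inner_left, ← EuclideanSpace.basisFun_apply,
      ← EuclideanSpace.basisFun_apply, inner_tiltedProjection_apply_basis b c hmaps hinj]
  refine ⟨_, hK ▸ finrank_range_tiltedProjection b c hmaps hinj, P,
    tiltedProjection_comp_self b c hmaps, rfl, fun m n hmn => ?_, fun n hn => ?_, fun n hn => ?_⟩
  · rw [hgram, if_neg (not_and_of_not_left _ hmn)]
  · rw [hgram, if_pos ⟨rfl, hn⟩, Real.sq_sqrt (sub_nonneg.mpr (ha n hn))]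
    ring
  · rw [hgram, if_neg (not_and_of_not_right _ hn)]
end

section
/- Let W be a k-dimensional subspace of an N-dimensional Hilbert space with k ≥ N/2. Then there exist two idempotents P₁, P₂, both with range W, such that P₁*P₁ + P₂*P₂ = 2·Id. -/
/-!
Let `q` be the orthogonal projection onto `W` and `A : Wᗮ → W` an isometry, which exists because
`dim Wᗮ ≤ dim W`. The partial isometry `s = A ∘ (projection onto Wᗮ)` satisfies `q s = s`,
`s q = 0` and `s* s = 1 - q`, so `q ± s` are idempotents with range `W`, and the parallelogram
identity gives
`(q + s)* (q + s) + (q - s)* (q - s) = 2 (q* q + s* s) = 2 (q + 1 - q) = 2`.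
-/

theorem IsIdempotentElem.add_of_mul_eq_of_mul_eq_zero {R : Type*} [Ring R] {q s : R}
    (hq : IsIdempotentElem q) (hqs : q * s = s) (hsq : s * q = 0) :
    IsIdempotentElem (q + s) := by
  have hss : s * s = 0 :=
    calc s * s = s * (q * s) := by rw [hqs]
      _ = 0 := by rw [← mul_assoc, hsq, zero_mul]
  simp only [IsIdempotentElem, add_mul, mul_add, hq.eq, hqs, hsq, hss]
  abel

theorem star_add_mul_add_add_star_sub_mul_sub {R : Type*} [Ring R] [StarRing R] (a b : R) :
    star (a + b) * (a + b) + star (a - b) * (a - b) = 2 * (star a * a + star b * b) := by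
  simp only [star_add, star_sub]
  noncomm_ring

theorem IsStarProjection.star_add_mul_add_add_star_sub_mul_sub_eq_two {R : Type*} [Ring R]
    [StarRing R] {q s : R} (hq : IsStarProjection q) (hs : star s * s = 1 - q) :
    star (q + s) * (q + s) + star (q - s) * (q - s) = 2 := by
  rw [star_add_mul_add_add_star_sub_mul_sub, hq.isSelfAdjoint.star_eq, hq.isIdempotentElem.eq, hs,
    add_sub_cancel, mul_one]

theorem ContinuousLinearMap.range_eq_of_mul_eq {R M : Type*} [Semiring R] [TopologicalSpace M]
    [AddCommMonoid M] [Module R M] {f g : M →L[R] M} (hfg : f * g = g) (hgf : g * f = f) :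
    f.range = g.range := by
  have hf : (g * f).range ≤ g.range :=
    LinearMap.range_comp_le_range (f : M →ₗ[R] M) (g : M →ₗ[R] M)
  have hg : (f * g).range ≤ f.range :=
    LinearMap.range_comp_le_range (g : M →ₗ[R] M) (f : M →ₗ[R] M)
  rw [hgf] at hf
  rw [hfg] at hg
  exact hf.antisymm hg

theorem exists_linearIsometry_of_finrank_le {𝕜 E F : Type*} [RCLike 𝕜]
    [NormedAddCommGroup E] [InnerProductSpace 𝕜 E] [FiniteDimensional 𝕜 E]
    [NormedAddCommGroup F] [InnerProductSpace 𝕜 F] [FiniteDimensional 𝕜 F]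
    (h : Module.finrank 𝕜 E ≤ Module.finrank 𝕜 F) : Nonempty (E →ₗᵢ[𝕜] F) := by
  let e := stdOrthonormalBasis 𝕜 E
  let f := stdOrthonormalBasis 𝕜 F
  let A := e.toBasis.constr 𝕜 (fun i ↦ f (Fin.castLE h i))
  have hA : ⇑A ∘ ⇑e.toBasis = fun i ↦ f (Fin.castLE h i) :=
    funext (e.toBasis.constr_basis 𝕜 _)
  refine ⟨A.isometryOfOrthonormal (v := e.toBasis) (by simp [e.orthonormal]) ?_⟩
  rw [hA]
  exact f.orthonormal.comp _ (Fin.castLE_injective h)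

namespace Submodule

variable {𝕜 E : Type*} [RCLike 𝕜] [NormedAddCommGroup E] [InnerProductSpace 𝕜 E]
  (K : Submodule 𝕜 E) [K.HasOrthogonalProjection]

noncomputable def partialIsometryOfOrthogonal (A : Kᗮ →ₗᵢ[𝕜] K) : E →L[𝕜] E :=
  K.subtypeL ∘L A.toContinuousLinearMap ∘L Kᗮ.orthogonalProjectionOnto

variable {K} (A : Kᗮ →ₗᵢ[𝕜] K)

theorem starProjection_mul_partialIsometryOfOrthogonal :
    K.starProjection * K.partialIsometryOfOrthogonal A = K.partialIsometryOfOrthogonal A := by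
  ext x
  simp [partialIsometryOfOrthogonal]

theorem partialIsometryOfOrthogonal_mul_starProjection :
    K.partialIsometryOfOrthogonal A * K.starProjection = 0 := by
  ext x
  simp [partialIsometryOfOrthogonal, orthogonalProjectionOnto_apply_of_mem_orthogonal]

theorem star_partialIsometryOfOrthogonal_mul_self [CompleteSpace E] [CompleteSpace K] :
    star (K.partialIsometryOfOrthogonal A) * K.partialIsometryOfOrthogonal A
      = 1 - K.starProjection := by
  rw [← starProjection_orthogonal', ContinuousLinearMap.star_eq_adjoint,
    partialIsometryOfOrthogonal]
  simp only [ContinuousLinearMap.adjoint_comp, adjoint_subtypeL, adjoint_orthogonalProjectionOnto]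
  ext x
  have hA := congr($(A.adjoint_comp_self) (Kᗮ.orthogonalProjectionOnto x))
  simp only [mul_apply_eq_comp, ContinuousLinearMap.comp_apply,
    subtypeL_apply, orthogonalProjectionOnto_mem_subspace_eq_self,
    one_apply_eq_self] at hA ⊢
  rw [hA]
  rfl

theorem range_starProjection_add {t : E →L[𝕜] E} (hqt : K.starProjection * t = t)
    (htq : t * K.starProjection = 0) : (K.starProjection + t).range = K := by
  have hq := isIdempotentElem_starProjection K
  refine .trans ?_ K.range_starProjection
  exact ContinuousLinearMap.range_eq_of_mul_eq (by rw [add_mul, htq, hq.eq, add_zero])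
    (by rw [mul_add, hqt, hq.eq])

theorem exists_isIdempotentElem_range_eq_star_mul_self_add_eq_two [CompleteSpace E]
    [CompleteSpace K] (A : Kᗮ →ₗᵢ[𝕜] K) :
    ∃ P₁ P₂ : E →L[𝕜] E, IsIdempotentElem P₁ ∧ IsIdempotentElem P₂ ∧
      P₁.range = K ∧ P₂.range = K ∧ star P₁ * P₁ + star P₂ * P₂ = 2 := by
  set q := K.starProjection
  set s := K.partialIsometryOfOrthogonal A
  have hq : IsStarProjection q := isStarProjection_starProjection
  have hqs : q * s = s := starProjection_mul_partialIsometryOfOrthogonal A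
  have hsq : s * q = 0 := partialIsometryOfOrthogonal_mul_starProjection A
  have hqs' : q * -s = -s := by rw [mul_neg, hqs]
  have hsq' : -s * q = 0 := by rw [neg_mul, hsq, neg_zero]
  refine ⟨q + s, q - s, hq.isIdempotentElem.add_of_mul_eq_of_mul_eq_zero hqs hsq, ?_,
    range_starProjection_add hqs hsq, ?_,
    hq.star_add_mul_add_add_star_sub_mul_sub_eq_two (star_partialIsometryOfOrthogonal_mul_self A)⟩
  · rw [sub_eq_add_neg]
    exact hq.isIdempotentElem.add_of_mul_eq_of_mul_eq_zero hqs' hsq'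
  · rw [sub_eq_add_neg]
    exact range_starProjection_add hqs' hsq'

end Submodule

theorem stmt_15 {H : Type*} [NormedAddCommGroup H] [InnerProductSpace ℂ H]
    [FiniteDimensional ℂ H] (N k : ℕ) (hN : Module.finrank ℂ H = N)
    (W : Submodule ℂ H) (hW : Module.finrank ℂ W = k) (hk : N ≤ 2 * k) :
    ∃ P₁ P₂ : H →ₗ[ℂ] H,
      P₁ ∘ₗ P₁ = P₁ ∧ P₂ ∘ₗ P₂ = P₂ ∧
      LinearMap.range P₁ = W ∧ LinearMap.range P₂ = W ∧
      LinearMap.adjoint P₁ ∘ₗ P₁ + LinearMap.adjoint P₂ ∘ₗ P₂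
        = (2 : ℂ) • LinearMap.id := by
  have hdim : Module.finrank ℂ Wᗮ ≤ Module.finrank ℂ W := by
    have := W.finrank_add_finrank_orthogonal
    omega
  obtain ⟨A⟩ := exists_linearIsometry_of_finrank_le hdim
  obtain ⟨P₁, P₂, h₁, h₂, hr₁, hr₂, hsum⟩ :=
    W.exists_isIdempotentElem_range_eq_star_mul_self_add_eq_two A
  refine ⟨P₁, P₂, congr(($h₁.eq : H →ₗ[ℂ] H)), congr(($h₂.eq : H →ₗ[ℂ] H)), hr₁, hr₂,
    ?_⟩
  rw [ContinuousLinearMap.adjoint_toLinearMap, ContinuousLinearMap.adjoint_toLinearMap,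
    ← ContinuousLinearMap.star_eq_adjoint, ← ContinuousLinearMap.star_eq_adjoint]
  calc _ = ((star P₁ * P₁ + star P₂ * P₂ : H →L[ℂ] H) : H →ₗ[ℂ] H) := rfl
    _ = (2 : ℂ) • LinearMap.id := by
      rw [hsum]
      ext x
      simp [two_smul ℂ x, two_nsmul]
end

section
/- Let N = kL and let H be an N-dimensional Hilbert space. Then there exists a k-dimensional subspace W and idempotents {P_j}_{j=1}^{L}, each with range W, such that ∑_{j=1}^{L} P_j* P_j = L·Id. -/
/-!
Identify `ℝ^(kL)` with `ℝ^k ⊗ ℝ^L`, i.e. with `L` blocks of size `k`, and let `W` be the vectors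
whose `L` blocks agree. `P_j` copies the `j`-th block into every block; it factors as
`S ∘ R_j`, where `R_j` restricts to block `j` and `S` spreads a vector of `ℝ^k` over all blocks.
Since `R_j ∘ S = id`, each `P_j` is idempotent with range `W`. Moreover `S` is `√L` times an
isometry and the `R_j` form a Parseval frame (`∑ R_jᵀ R_j = id`), so `∑ P_jᵀ P_j = L · id`.
-/

open scoped InnerProductSpace

section Parseval

variable {𝕜 E ι : Type*} [RCLike 𝕜] [NormedAddCommGroup E] [InnerProductSpace 𝕜 E]
  [FiniteDimensional 𝕜 E] [Fintype ι]

theorem sum_adjoint_comp_self_eq_smul_id {P : ι → E →ₗ[𝕜] E} {c : 𝕜}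
    (h : ∀ x y, ∑ j, ⟪P j x, P j y⟫_𝕜 = c * ⟪x, y⟫_𝕜) :
    ∑ j, LinearMap.adjoint (P j) ∘ₗ P j = c • LinearMap.id := by
  refine LinearMap.ext fun y => ext_inner_left 𝕜 fun x => ?_
  simp only [LinearMap.sum_apply, inner_sum, LinearMap.comp_apply,
    LinearMap.adjoint_inner_right, h, LinearMap.smul_apply, LinearMap.id_apply, inner_smul_right]

end Parseval

namespace BlockCopy

variable {n κ ι : Type*} (e : n ≃ κ × ι)

noncomputable section

def spread : EuclideanSpace ℝ κ →ₗ[ℝ] EuclideanSpace ℝ n where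
  toFun y := WithLp.toLp 2 fun m => y (e m).1
  map_add' _ _ := rfl
  map_smul' _ _ := rfl

def restrictBlock (j : ι) : EuclideanSpace ℝ n →ₗ[ℝ] EuclideanSpace ℝ κ where
  toFun x := WithLp.toLp 2 fun a => x (e.symm (a, j))
  map_add' _ _ := rfl
  map_smul' _ _ := rfl

def blockCopy (j : ι) : EuclideanSpace ℝ n →ₗ[ℝ] EuclideanSpace ℝ n :=
  spread e ∘ₗ restrictBlock e j

end

variable {e}

@[simp]
theorem spread_apply (y : EuclideanSpace ℝ κ) (m : n) : spread e y m = y (e m).1 := rfl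

@[simp]
theorem restrictBlock_apply (j : ι) (x : EuclideanSpace ℝ n) (a : κ) :
    restrictBlock e j x a = x (e.symm (a, j)) := rfl

theorem restrictBlock_comp_spread (j : ι) : restrictBlock e j ∘ₗ spread e = LinearMap.id := by
  ext y a
  simp

theorem blockCopy_comp_self (j : ι) : blockCopy e j ∘ₗ blockCopy e j = blockCopy e j := by
  rw [blockCopy, LinearMap.comp_assoc, ← LinearMap.comp_assoc (restrictBlock e j),
    restrictBlock_comp_spread, LinearMap.id_comp]

theorem range_blockCopy (j : ι) : LinearMap.range (blockCopy e j) = LinearMap.range (spread e) :=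
  LinearMap.range_comp_of_range_eq_top _ <| LinearMap.range_eq_top.2 <|
    Function.RightInverse.surjective fun y => LinearMap.congr_fun (restrictBlock_comp_spread j) y

theorem spread_injective [Nonempty ι] : Function.Injective (spread e) :=
  Function.LeftInverse.injective (g := restrictBlock e (Classical.arbitrary ι))
    fun y => LinearMap.congr_fun (restrictBlock_comp_spread _) y

theorem finrank_range_spread [Fintype κ] [Nonempty ι] :
    Module.finrank ℝ (LinearMap.range (spread e)) = Fintype.card κ := by
  rw [LinearMap.finrank_range_of_inj spread_injective, finrank_euclideanSpace]

variable [Fintype n] [Fintype κ] [Fintype ι]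

theorem inner_spread (y z : EuclideanSpace ℝ κ) :
    ⟪spread e y, spread e z⟫_ℝ = Fintype.card ι * ⟪y, z⟫_ℝ := by
  simp only [PiLp.inner_apply, spread_apply]
  rw [← e.symm.sum_comp, Fintype.sum_prod_type, Finset.mul_sum]
  simp

theorem sum_inner_restrictBlock (x z : EuclideanSpace ℝ n) :
    ∑ j, ⟪restrictBlock e j x, restrictBlock e j z⟫_ℝ = ⟪x, z⟫_ℝ := by
  simp only [PiLp.inner_apply, restrictBlock_apply]
  rw [← e.symm.sum_comp (fun m => ⟪x m, z m⟫_ℝ), Fintype.sum_prod_type, Finset.sum_comm]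

theorem sum_adjoint_blockCopy_comp_self :
    ∑ j, LinearMap.adjoint (blockCopy e j) ∘ₗ blockCopy e j =
      (Fintype.card ι : ℝ) • LinearMap.id :=
  sum_adjoint_comp_self_eq_smul_id fun x z => by
    simp only [blockCopy, LinearMap.comp_apply, inner_spread, ← Finset.mul_sum,
      sum_inner_restrictBlock]

end BlockCopy

open BlockCopy

theorem stmt_16_general (k L : ℕ) (hL : 0 < L) :
    ∃ W : Submodule ℝ (EuclideanSpace ℝ (Fin (k * L))),
      Module.finrank ℝ W = k ∧
      ∃ P : Fin L → (EuclideanSpace ℝ (Fin (k * L)) →ₗ[ℝ] EuclideanSpace ℝ (Fin (k * L))),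
        (∀ j, P j ∘ₗ P j = P j) ∧
        (∀ j, LinearMap.range (P j) = W) ∧
        ∑ j, LinearMap.adjoint (P j) ∘ₗ P j = (L : ℝ) • LinearMap.id := by
  have : Nonempty (Fin L) := Fin.pos_iff_nonempty.1 hL
  let e : Fin (k * L) ≃ Fin k × Fin L := finProdFinEquiv.symm
  refine ⟨LinearMap.range (spread e), ?_, blockCopy e, blockCopy_comp_self, range_blockCopy, ?_⟩
  · rw [finrank_range_spread, Fintype.card_fin]
  · rw [sum_adjoint_blockCopy_comp_self, Fintype.card_fin]

theorem stmt_16 (k L : ℕ) (hk : 0 < k) (hL : 0 < L) :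
    ∃ W : Submodule ℝ (EuclideanSpace ℝ (Fin (k * L))),
      Module.finrank ℝ W = k ∧
      ∃ P : Fin L → (EuclideanSpace ℝ (Fin (k * L)) →ₗ[ℝ] EuclideanSpace ℝ (Fin (k * L))),
        (∀ j, P j ∘ₗ P j = P j) ∧
        (∀ j, LinearMap.range (P j) = W) ∧
        ∑ j, LinearMap.adjoint (P j) ∘ₗ P j = (L : ℝ) • LinearMap.id :=
  stmt_16_general k L hL
end

section
/- In ℝ³, let W = span{(1,0,0), (0,1/√2,1/√2)}. Then there are two idempotents P and Q, both with range W (P projecting along e₃, Q projecting along e₂), such that P*P + Q*Q = 2·Id. -/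
/-!
In the standard basis take `P (x, y, z) = (x, y, y)` and `Q (x, y, z) = (x, z, z)`: both are
idempotent, both have range `span {e₁, e₂ + e₃} = W`, and they kill `e₃` and `e₂` respectively.
Since `‖P v‖² + ‖Q v‖² = 2x² + 2y² + 2z² = 2‖v‖²`, polarization gives `P* P + Q* Q = 2`;
on matrices this is the identity `Pᵀ P + Qᵀ Q = 2 • 1`.
-/

open Matrix WithLp Submodule

theorem Submodule.span_pair_smul_right_of_isUnit {R M : Type*} [Semiring R] [AddCommMonoid M]
    [Module R M] (x y : M) {c : R} (hc : IsUnit c) : span R {x, c • y} = span R {x, y} := by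
  rw [span_insert, span_insert, span_singleton_smul_eq hc]

theorem LinearMap.range_eq_span_of_forall_apply_mem_of_forall_apply_eq_self {R M : Type*}
    [Semiring R] [AddCommMonoid M] [Module R M] {f : M →ₗ[R] M} {s : Set M}
    (hmem : ∀ x, f x ∈ span R s) (hfix : ∀ v ∈ s, f v = v) : LinearMap.range f = span R s :=
  le_antisymm (LinearMap.range_le_iff_comap.2 <| eq_top_iff.2 fun x _ => hmem x)
    (span_le.2 fun v hv => ⟨v, hfix v hv⟩)

theorem LinearMap.ker_eq_span_of_isIdempotentElem {R M : Type*} [Ring R] [AddCommGroup M]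
    [Module R M] {f : M →ₗ[R] M} (hf : IsIdempotentElem f) {s : Set M}
    (hmem : ∀ x, x - f x ∈ span R s) (hker : ∀ v ∈ s, f v = 0) : LinearMap.ker f = span R s := by
  rw [LinearMap.IsIdempotentElem.ker_eq_range hf]
  exact LinearMap.range_eq_span_of_forall_apply_mem_of_forall_apply_eq_self hmem
    fun v hv => by simp [hker v hv]

namespace TwoIdempotents

def matrixP : Matrix (Fin 3) (Fin 3) ℝ := !![1, 0, 0; 0, 1, 0; 0, 1, 0]

def matrixQ : Matrix (Fin 3) (Fin 3) ℝ := !![1, 0, 0; 0, 0, 1; 0, 0, 1]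

theorem isIdempotentElem_toEuclideanLin_matrixP : IsIdempotentElem (toEuclideanLin matrixP) := by
  have hmul : matrixP * matrixP = matrixP := by simp [matrixP]
  rw [IsIdempotentElem, Module.End.mul_eq_comp, ← toLpLin_mul_same, hmul]

theorem isIdempotentElem_toEuclideanLin_matrixQ : IsIdempotentElem (toEuclideanLin matrixQ) := by
  have hmul : matrixQ * matrixQ = matrixQ := by simp [matrixQ]
  rw [IsIdempotentElem, Module.End.mul_eq_comp, ← toLpLin_mul_same, hmul]

theorem toEuclideanLin_matrixP_apply (v : EuclideanSpace ℝ (Fin 3)) :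
    toEuclideanLin matrixP v = v 0 • !₂[1, 0, 0] + v 1 • !₂[0, 1, 1] := by
  ext i
  fin_cases i <;> simp [matrixP, toLpLin_apply, vecHead, vecTail]

theorem toEuclideanLin_matrixQ_apply (v : EuclideanSpace ℝ (Fin 3)) :
    toEuclideanLin matrixQ v = v 0 • !₂[1, 0, 0] + v 2 • !₂[0, 1, 1] := by
  ext i
  fin_cases i <;> simp [matrixQ, toLpLin_apply, vecHead, vecTail]

theorem range_toEuclideanLin_matrixP :
    LinearMap.range (toEuclideanLin matrixP) = span ℝ {!₂[1, 0, 0], !₂[0, 1, 1]} := by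
  refine LinearMap.range_eq_span_of_forall_apply_mem_of_forall_apply_eq_self
    (fun v => ?_) fun v hv => ?_
  · rw [toEuclideanLin_matrixP_apply]
    exact mem_span_pair.2 ⟨_, _, rfl⟩
  · rcases hv with rfl | rfl <;> rw [toEuclideanLin_matrixP_apply] <;> ext i <;> fin_cases i <;>
      simp

theorem range_toEuclideanLin_matrixQ :
    LinearMap.range (toEuclideanLin matrixQ) = span ℝ {!₂[1, 0, 0], !₂[0, 1, 1]} := by
  refine LinearMap.range_eq_span_of_forall_apply_mem_of_forall_apply_eq_self
    (fun v => ?_) fun v hv => ?_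
  · rw [toEuclideanLin_matrixQ_apply]
    exact mem_span_pair.2 ⟨_, _, rfl⟩
  · rcases hv with rfl | rfl <;> rw [toEuclideanLin_matrixQ_apply] <;> ext i <;> fin_cases i <;>
      simp

theorem ker_toEuclideanLin_matrixP :
    LinearMap.ker (toEuclideanLin matrixP) = span ℝ {EuclideanSpace.single 2 1} := by
  refine LinearMap.ker_eq_span_of_isIdempotentElem isIdempotentElem_toEuclideanLin_matrixP
    (fun v => mem_span_singleton.2 ⟨v 2 - v 1, ?_⟩) ?_
  · ext i
    fin_cases i <;> simp [toEuclideanLin_matrixP_apply]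
  · rintro v rfl
    simp [toEuclideanLin_matrixP_apply]

theorem ker_toEuclideanLin_matrixQ :
    LinearMap.ker (toEuclideanLin matrixQ) = span ℝ {EuclideanSpace.single 1 1} := by
  refine LinearMap.ker_eq_span_of_isIdempotentElem isIdempotentElem_toEuclideanLin_matrixQ
    (fun v => mem_span_singleton.2 ⟨v 1 - v 2, ?_⟩) ?_
  · ext i
    fin_cases i <;> simp [toEuclideanLin_matrixQ_apply]
  · rintro v rfl
    simp [toEuclideanLin_matrixQ_apply]

theorem adjoint_comp_add_adjoint_comp :
    LinearMap.adjoint (toEuclideanLin matrixP) ∘ₗ toEuclideanLin matrixP +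
      LinearMap.adjoint (toEuclideanLin matrixQ) ∘ₗ toEuclideanLin matrixQ =
      (2 : ℝ) • LinearMap.id := by
  have hmat : matrixPᴴ * matrixP + matrixQᴴ * matrixQ = (2 : ℝ) • 1 := by
    ext i j
    fin_cases i <;> fin_cases j <;> simp [matrixP, matrixQ, mul_apply, Fin.sum_univ_three] <;>
      norm_num
  simp_rw [← toEuclideanLin_conjTranspose_eq_adjoint, ← toLpLin_mul_same, ← map_add, hmat,
    map_smul, toLpLin_one]

end TwoIdempotents

open TwoIdempotents in
theorem stmt_17
    (W : Submodule ℝ (EuclideanSpace ℝ (Fin 3)))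
    (hW : W = Submodule.span ℝ
      {(WithLp.equiv 2 (Fin 3 → ℝ)).symm ![1, 0, 0],
       (WithLp.equiv 2 (Fin 3 → ℝ)).symm ![0, 1 / Real.sqrt 2, 1 / Real.sqrt 2]}) :
    ∃ P Q : EuclideanSpace ℝ (Fin 3) →ₗ[ℝ] EuclideanSpace ℝ (Fin 3),
      P ∘ₗ P = P ∧ Q ∘ₗ Q = Q ∧
      LinearMap.range P = W ∧ LinearMap.range Q = W ∧
      LinearMap.ker P = Submodule.span ℝ {EuclideanSpace.single (2 : Fin 3) (1 : ℝ)} ∧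
      LinearMap.ker Q = Submodule.span ℝ {EuclideanSpace.single (1 : Fin 3) (1 : ℝ)} ∧
      LinearMap.adjoint P ∘ₗ P + LinearMap.adjoint Q ∘ₗ Q = (2 : ℝ) • LinearMap.id := by
  have hW' : W = span ℝ {!₂[1, 0, 0], !₂[0, 1, 1]} := by
    have hsqrt : IsUnit (Real.sqrt 2)⁻¹ := by simp
    rw [hW, ← span_pair_smul_right_of_isUnit _ !₂[0, 1, 1] hsqrt]
    congr
    ext i
    fin_cases i <;> simp
  exact ⟨toEuclideanLin matrixP, toEuclideanLin matrixQ,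
    isIdempotentElem_toEuclideanLin_matrixP, isIdempotentElem_toEuclideanLin_matrixQ,
    hW' ▸ range_toEuclideanLin_matrixP, hW' ▸ range_toEuclideanLin_matrixQ,
    ker_toEuclideanLin_matrixP, ker_toEuclideanLin_matrixQ, adjoint_comp_add_adjoint_comp⟩
end
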